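/- arXiv:1506.07425 — 6 statements merged into one kernel-verified Lean document; each statement's English description precedes it below -/
import Mathlib

section
/- Let g ∈ L¹[0,∞) and suppose ∫₀^∞ e^{−iπ e^{s−t} cos(t−s)} g(t) dt = 0 for all s ∈ ℝ. Then g = 0 a.e. (Heisenberg uniqueness: the spiral Γ = {(e^{−t}cos t, e^{−t}sin t) : t ≥ 0} paired with the anti-spiral Λ = {(e^s cos s, e^s sin s) : s ≤ 0} is a Heisenberg uniqueness pair.) -/
/-!
Write `e^{-t} cos (t - s)` as the pairing of the spiral point `e^{-t} (cos t, sin t)` with the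
unit vector `(cos s, sin s)`. Expanding the kernel `exp (-iπ e^s e^{-t} cos (t - s))` in powers of
`e^s` turns the hypothesis, for `s ≤ 0`, into `∑ₙ e^{ns} (-iπ)ⁿ/n! Qₙ(s) = 0`, where the moments
`Qₙ(s) = ∫ (e^{-t} cos (t - s))ⁿ g(t) dt` (`spiralMoment g n s`) are bounded and `2π`-periodic in
`s`. Letting `s → -∞` shows inductively that every `Qₙ` vanishes: once the lower coefficients are
gone, the rest of the series is `O(e^s)`, and a periodic function tending to `0` is `0`.
Averaging `Q₂ₘ` over a period leaves a positive multiple of `∫ e^{-2mt} g(t) dt`; as polynomials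
in `e^{-2t} ∈ (0, 1]` are uniformly dense, `g` vanishes on `(0, ∞)`.
-/

open MeasureTheory Real Filter Topology Set

theorem Function.Periodic.eq_of_tendsto_atBot {α : Type*} [TopologicalSpace α] [T2Space α]
    {f : ℝ → α} {c : ℝ} {y : α} (hf : Function.Periodic f c) (hc : 0 < c)
    (h : Tendsto f atBot (𝓝 y)) (x : ℝ) : f x = y := by
  have hshift : Tendsto (fun n : ℕ => x - n * c) atTop atBot :=
    tendsto_atBot_add_const_left _ x
      (tendsto_neg_atTop_atBot.comp (tendsto_natCast_atTop_atTop.atTop_mul_const hc))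
  refine tendsto_nhds_unique ?_ (h.comp hshift)
  simp only [Function.comp_def, hf.sub_nat_mul_eq]
  exact tendsto_const_nhds

section PeriodicCoefficients

variable {P : ℕ → ℝ → ℂ} {β : ℕ → ℝ} {c : ℝ}

lemma coeff_zero_eq_zero_of_tsum_exp_pow_mul_eq_zero (hc : 0 < c)
    (hper : Function.Periodic (P 0) c) (hP : ∀ n s, ‖P n s‖ ≤ β n) (hβ : Summable β)
    (h : ∀ s ≤ 0, ∑' n, (Real.exp s : ℂ) ^ n * P n s = 0) :
    P 0 = 0 ∧ ∀ s ≤ 0, ∑' n, (Real.exp s : ℂ) ^ n * P (n + 1) s = 0 := by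
  set R : ℝ → ℂ := fun s => ∑' n, (Real.exp s : ℂ) ^ n * P (n + 1) s
  have hterm : ∀ s ≤ 0, ∀ n m, ‖(Real.exp s : ℂ) ^ n * P m s‖ ≤ β m := by
    intro s hs n m
    rw [norm_mul, norm_pow, Complex.norm_real, Real.norm_of_nonneg (exp_pos s).le]
    exact (mul_le_of_le_one_left (norm_nonneg _)
      (pow_le_one₀ (exp_nonneg s) (exp_le_one_iff.2 hs))).trans (hP m s)
  have hsplit : ∀ s ≤ 0, P 0 s + Real.exp s * R s = 0 := by
    intro s hs
    rw [← h s hs, (Summable.of_norm_bounded hβ fun n => hterm s hs n n).tsum_eq_zero_add,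
      ← tsum_mul_left]
    simp only [pow_zero, one_mul, pow_succ]
    exact congrArg _ (tsum_congr fun n => by ring)
  have hR : ∀ s ≤ 0, ‖R s‖ ≤ ∑' n, β (n + 1) := fun s hs =>
    tsum_of_norm_bounded ((summable_nat_add_iff 1).2 hβ).hasSum fun n => hterm s hs n (n + 1)
  have hP0 : P 0 = 0 := by
    refine funext fun x => hper.eq_of_tendsto_atBot hc ?_ x
    have hbound : Tendsto (fun s => Real.exp s * ∑' n, β (n + 1)) atBot (𝓝 0) := by
      simpa using tendsto_exp_atBot.mul_const (∑' n, β (n + 1))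
    refine squeeze_zero_norm' ?_ hbound
    filter_upwards [eventually_le_atBot 0] with s hs
    rw [eq_neg_of_add_eq_zero_left (hsplit s hs), norm_neg, norm_mul, Complex.norm_real,
      Real.norm_of_nonneg (exp_pos s).le]
    exact mul_le_mul_of_nonneg_left (hR s hs) (exp_pos s).le
  refine ⟨hP0, fun s hs => ?_⟩
  have hRs := hsplit s hs
  rw [hP0, Pi.zero_apply, zero_add, mul_eq_zero] at hRs
  exact hRs.resolve_left (by exact_mod_cast (exp_pos s).ne')

lemma coeff_eq_zero_of_tsum_exp_pow_mul_eq_zero (hc : 0 < c)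
    (hper : ∀ n, Function.Periodic (P n) c) (hP : ∀ n s, ‖P n s‖ ≤ β n) (hβ : Summable β)
    (h : ∀ s ≤ 0, ∑' n, (Real.exp s : ℂ) ^ n * P n s = 0) (n : ℕ) : P n = 0 := by
  have hshift : ∀ k, ∀ s ≤ 0, ∑' n, (Real.exp s : ℂ) ^ n * P (n + k) s = 0 := by
    intro k
    induction k with
    | zero => simpa using h
    | succ k ih =>
      simpa only [add_right_comm _ 1 k, add_assoc] using
        (coeff_zero_eq_zero_of_tsum_exp_pow_mul_eq_zero (P := fun n => P (n + k)) hc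
          (by simpa using hper k) (fun n s => hP (n + k) s) ((summable_nat_add_iff k).2 hβ) ih).2
  simpa using (coeff_zero_eq_zero_of_tsum_exp_pow_mul_eq_zero (P := fun m => P (m + n)) hc
    (by simpa using hper n) (fun m s => hP (m + n) s) ((summable_nat_add_iff n).2 hβ)
    (hshift n)).1

end PeriodicCoefficients

open Nat in
lemma integral_cexp_mul_eq_tsum {α : Type*} [MeasurableSpace α] {μ : Measure α} {r g : α → ℂ}
    {R : ℝ} (hr : AEStronglyMeasurable r μ) (hR : ∀ᵐ a ∂μ, ‖r a‖ ≤ R) (hg : Integrable g μ)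
    (z : ℂ) :
    ∫ a, Complex.exp (z * r a) * g a ∂μ = ∑' n : ℕ, z ^ n / n ! * ∫ a, r a ^ n * g a ∂μ := by
  have hpow : ∀ n : ℕ, ∀ᵐ a ∂μ, ‖r a ^ n‖ ≤ R ^ n := fun n => hR.mono fun a ha => by
    rw [norm_pow]; exact pow_le_pow_left₀ (norm_nonneg _) ha n
  have hint : ∀ n : ℕ, Integrable (fun a => r a ^ n * g a) μ := fun n =>
    hg.bdd_mul (hr.pow n) (hpow n)
  have hexp : ∀ a, Complex.exp (z * r a) * g a = ∑' n : ℕ, z ^ n / n ! * (r a ^ n * g a) := by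
    intro a
    rw [Complex.exp_eq_exp_ℂ, ← (NormedSpace.expSeries_div_hasSum_exp (z * r a)).tsum_eq,
      ← tsum_mul_right]
    congr 1 with n
    rw [mul_pow]
    ring
  simp_rw [hexp]
  rw [← integral_tsum_of_summable_integral_norm (fun n => (hint n).const_mul _)]
  · simp_rw [integral_const_mul]
  · have hnorm : ∀ n : ℕ, ∫ a, ‖r a ^ n * g a‖ ∂μ ≤ R ^ n * ∫ a, ‖g a‖ ∂μ := by
      intro n
      rw [← integral_const_mul]
      refine integral_mono_ae (hint n).norm (hg.norm.const_mul _) ?_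
      filter_upwards [hpow n] with a ha
      rw [norm_mul]
      exact mul_le_mul_of_nonneg_right ha (norm_nonneg _)
    refine Summable.of_nonneg_of_le (fun n => integral_nonneg fun a => norm_nonneg _)
      (fun n => ?_) ((Real.summable_pow_div_factorial (‖z‖ * R)).mul_right (∫ a, ‖g a‖ ∂μ))
    calc ∫ a, ‖z ^ n / n ! * (r a ^ n * g a)‖ ∂μ = ‖z‖ ^ n / n ! * ∫ a, ‖r a ^ n * g a‖ ∂μ := by
          simp_rw [norm_mul (z ^ n / n !), norm_div, norm_pow, Complex.norm_natCast]
          exact integral_const_mul _ _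
      _ ≤ ‖z‖ ^ n / n ! * (R ^ n * ∫ a, ‖g a‖ ∂μ) := by gcongr; exact hnorm n
      _ = (‖z‖ * R) ^ n / n ! * ∫ a, ‖g a‖ ∂μ := by ring

lemma abs_exp_neg_mul_cos_le_one {t : ℝ} (ht : 0 ≤ t) (s : ℝ) :
    |Real.exp (-t) * Real.cos (t - s)| ≤ 1 := by
  rw [abs_mul, abs_of_pos (exp_pos _)]
  exact mul_le_one₀ (exp_le_one_iff.2 (neg_nonpos.2 ht)) (abs_nonneg _) (abs_cos_le_one _)

lemma integral_cos_sub_pow (N : ℕ) (t : ℝ) :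
    ∫ s in (0)..2 * π, Real.cos (t - s) ^ N = ∫ s in (0)..2 * π, Real.cos s ^ N := by
  have hper : Function.Periodic (fun s => Real.cos s ^ N) (2 * π) := fun s => by
    simp only [cos_add_two_pi]
  rw [intervalIntegral.integral_comp_sub_left (fun s => Real.cos s ^ N),
    show t - 0 = t - 2 * π + 2 * π by ring, hper.intervalIntegral_add_eq, zero_add]

lemma integral_cos_pow_two_mul_pos (m : ℕ) : 0 < ∫ s in (0)..2 * π, Real.cos s ^ (2 * m) := by
  induction m with
  | zero => simp [pi_pos]
  | succ m ih =>
    rw [mul_add, mul_one, integral_cos_pow]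
    simp only [sin_two_pi, sin_zero, mul_zero, sub_zero, zero_div, zero_add]
    exact mul_pos (by positivity) ih

noncomputable def spiralMoment (g : ℝ → ℂ) (N : ℕ) (s : ℝ) : ℂ :=
  ∫ t in Ioi 0, ((Real.exp (-t) * Real.cos (t - s) : ℝ) : ℂ) ^ N * g t

section SpiralMoment

variable {g : ℝ → ℂ}

lemma spiralMoment_periodic (N : ℕ) : Function.Periodic (spiralMoment g N) (2 * π) := by
  intro s
  simp only [spiralMoment, sub_add_eq_sub_sub, cos_sub_two_pi]

lemma norm_spiralMoment_le (hg : IntegrableOn g (Ioi 0)) (N : ℕ) (s : ℝ) :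
    ‖spiralMoment g N s‖ ≤ ∫ t in Ioi 0, ‖g t‖ := by
  refine norm_integral_le_of_norm_le hg.norm ((ae_restrict_iff' measurableSet_Ioi).2 ?_)
  filter_upwards with t ht
  rw [norm_mul, norm_pow, Complex.norm_real, Real.norm_eq_abs]
  exact mul_le_of_le_one_left (norm_nonneg _)
    (pow_le_one₀ (abs_nonneg _) (abs_exp_neg_mul_cos_le_one (le_of_lt ht) s))

open Nat in
lemma spiralMoment_eq_zero (hg : IntegrableOn g (Ioi 0))
    (hvanish : ∀ s ≤ 0,
      ∫ t in Ioi 0,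
        Complex.exp (-(Complex.I * π * (Real.exp (s - t) : ℂ) * (Real.cos (t - s) : ℂ))) * g t
          = 0)
    (N : ℕ) : spiralMoment g N = 0 := by
  set a : ℂ := -(Complex.I * π)
  have hseries : ∀ s ≤ 0,
      ∑' n, (Real.exp s : ℂ) ^ n * (a ^ n / n ! * spiralMoment g n s) = 0 := by
    intro s hs
    have hkernel : ∀ t : ℝ,
        -(Complex.I * π * (Real.exp (s - t) : ℂ) * (Real.cos (t - s) : ℂ))
          = a * Real.exp s * ((Real.exp (-t) * Real.cos (t - s) : ℝ) : ℂ) := by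
      intro t
      rw [sub_eq_add_neg s t, Real.exp_add]
      push_cast
      ring
    have hR : ∀ᵐ t ∂volume.restrict (Ioi 0),
        ‖((Real.exp (-t) * Real.cos (t - s) : ℝ) : ℂ)‖ ≤ 1 := by
      refine (ae_restrict_iff' measurableSet_Ioi).2 (ae_of_all _ fun t ht => ?_)
      rw [Complex.norm_real, Real.norm_eq_abs]
      exact abs_exp_neg_mul_cos_le_one (le_of_lt ht) s
    have hvanish_s := hvanish s hs
    simp_rw [hkernel] at hvanish_s
    rw [integral_cexp_mul_eq_tsum (by fun_prop) hR hg] at hvanish_s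
    rw [← hvanish_s]
    exact tsum_congr fun n => by rw [spiralMoment, mul_pow]; ring
  have hbound : ∀ n s, ‖a ^ n / n ! * spiralMoment g n s‖ ≤ π ^ n / n ! * ∫ t in Ioi 0, ‖g t‖ := by
    intro n s
    have hnorm_a : ‖a‖ = π := by simp [a, abs_of_pos pi_pos]
    rw [norm_mul, norm_div, norm_pow, Complex.norm_natCast, hnorm_a]
    exact mul_le_mul_of_nonneg_left (norm_spiralMoment_le hg n s) (by positivity)
  have hcoeff := coeff_eq_zero_of_tsum_exp_pow_mul_eq_zero two_pi_pos
    (fun n s => by simp only [spiralMoment_periodic n s]) hbound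
    ((Real.summable_pow_div_factorial π).mul_right _) hseries N
  have ha : a ^ N / N ! ≠ 0 := by simp [a, pi_ne_zero, factorial_ne_zero]
  exact funext fun s => (mul_eq_zero.1 (congrFun hcoeff s)).resolve_left ha

lemma intervalIntegral_spiralMoment (hg : IntegrableOn g (Ioi 0)) (N : ℕ) :
    ∫ s in (0)..2 * π, spiralMoment g N s
      = (∫ s in (0)..2 * π, Real.cos s ^ N : ℝ)
          * ∫ t in Ioi 0, ((Real.exp (-t) ^ N : ℝ) : ℂ) * g t := by
  set h : ℝ → ℂ := fun t => ((Real.exp (-t) ^ N : ℝ) : ℂ) * g t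
  have hh : IntegrableOn h (Ioi 0) := by
    refine hg.bdd_mul (c := 1) (by fun_prop) ((ae_restrict_iff' measurableSet_Ioi).2 ?_)
    filter_upwards with t ht
    rw [Complex.norm_real, Real.norm_of_nonneg (by positivity)]
    exact pow_le_one₀ (exp_pos _).le (exp_le_one_iff.2 (neg_nonpos.2 (le_of_lt ht)))
  have hprod : Integrable (Function.uncurry fun s t => ((Real.cos (t - s) ^ N : ℝ) : ℂ) * h t)
      ((volume.restrict (uIoc 0 (2 * π))).prod (volume.restrict (Ioi 0))) := by
    rw [uIoc_of_le two_pi_pos.le]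
    refine Integrable.mono' ((integrable_const (1 : ℝ)).mul_prod hh.norm)
      ((Continuous.aestronglyMeasurable (by fun_prop)).mul hh.aestronglyMeasurable.comp_snd)
      (ae_of_all _ fun p => ?_)
    rw [Function.uncurry_apply_pair, norm_mul, Complex.norm_real, norm_pow, Real.norm_eq_abs]
    exact mul_le_mul_of_nonneg_right (pow_le_one₀ (abs_nonneg _) (abs_cos_le_one _))
      (norm_nonneg _)
  calc ∫ s in (0)..2 * π, spiralMoment g N s
      = ∫ s in (0)..2 * π, ∫ t in Ioi 0, ((Real.cos (t - s) ^ N : ℝ) : ℂ) * h t := by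
        refine intervalIntegral.integral_congr fun s _ =>
          integral_congr_ae (ae_of_all _ fun t => ?_)
        simp only [h]
        push_cast
        ring
    _ = ∫ t in Ioi 0, (∫ s in (0)..2 * π, ((Real.cos (t - s) ^ N : ℝ) : ℂ)) * h t := by
        rw [intervalIntegral_integral_swap hprod]
        simp_rw [intervalIntegral.integral_mul_const]
    _ = _ := by
        simp_rw [intervalIntegral.integral_ofReal, integral_cos_sub_pow]
        exact integral_const_mul _ _

lemma integral_exp_pow_smul_eq_zero_of_spiralMoment_eq_zero (hg : IntegrableOn g (Ioi 0)) {m : ℕ}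
    (hmom : spiralMoment g (2 * m) = 0) :
    ∫ t in Ioi 0, Real.exp (-(2 * t)) ^ m • g t = 0 := by
  have h := intervalIntegral_spiralMoment hg (2 * m)
  simp only [hmom, Pi.zero_apply, intervalIntegral.integral_zero] at h
  have hW : ((∫ s in (0)..2 * π, Real.cos s ^ (2 * m) : ℝ) : ℂ) ≠ 0 :=
    Complex.ofReal_ne_zero.2 (integral_cos_pow_two_mul_pos m).ne'
  rw [eq_comm, mul_eq_zero, or_iff_right hW] at h
  rw [← h]
  refine integral_congr_ae (ae_of_all _ fun t => ?_)
  have hsq : Real.exp (-(2 * t)) = Real.exp (-t) ^ 2 := by rw [← Real.exp_nat_mul]; ring_nf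
  dsimp only
  rw [Complex.real_smul, hsq, pow_mul]

end SpiralMoment

lemma integral_comp_smul_eq_zero_of_forall_pow {α E : Type*} [MeasurableSpace α] {μ : Measure α}
    [NormedAddCommGroup E] [NormedSpace ℝ E] {u : α → ℝ} {g : α → E} {a b : ℝ}
    (hu : AEMeasurable u μ) (hab : ∀ᵐ x ∂μ, u x ∈ Icc a b) (hg : Integrable g μ)
    (h : ∀ n : ℕ, ∫ x, u x ^ n • g x ∂μ = 0) {φ : ℝ → ℝ} (hφ : Continuous φ) :
    ∫ x, φ (u x) • g x ∂μ = 0 := by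
  have hbounded : ∀ {f : ℝ → ℝ}, Continuous f → Integrable (fun x => f (u x) • g x) μ := by
    intro f hf
    obtain ⟨C, hC⟩ := isCompact_Icc.exists_bound_of_continuousOn hf.continuousOn
    exact hg.bdd_smul C (hf.measurable.comp_aemeasurable hu).aestronglyMeasurable
      (hab.mono fun x hx => hC _ hx)
  have hpoly : ∀ p : Polynomial ℝ, ∫ x, p.eval (u x) • g x ∂μ = 0 := by
    intro p
    simp_rw [Polynomial.eval_eq_sum_range, Finset.sum_smul]
    rw [integral_finsetSum _ fun i _ => hbounded (f := fun y => p.coeff i * y ^ i) (by fun_prop)]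
    simp [mul_smul, integral_smul, h]
  have hclose : ∀ ε > 0, ‖∫ x, φ (u x) • g x ∂μ‖ ≤ ε * ∫ x, ‖g x‖ ∂μ := by
    intro ε hε
    obtain ⟨p, hp⟩ := exists_polynomial_near_of_continuousOn a b φ hφ.continuousOn ε hε
    rw [← sub_zero (∫ x, φ (u x) • g x ∂μ), ← hpoly p,
      ← integral_sub (hbounded hφ) (hbounded p.continuous), ← integral_const_mul]
    refine norm_integral_le_of_norm_le (hg.norm.const_mul ε) ?_
    filter_upwards [hab] with x hx
    rw [← sub_smul, norm_smul, Real.norm_eq_abs, abs_sub_comm]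
    exact mul_le_mul_of_nonneg_right (hp _ hx).le (norm_nonneg _)
  have hlim : Tendsto (fun ε => ε * ∫ x, ‖g x‖ ∂μ) (𝓝[>] 0) (𝓝 0) := by
    simpa using ((tendsto_id (x := 𝓝 (0 : ℝ))).mul_const (∫ x, ‖g x‖ ∂μ)).mono_left
      nhdsWithin_le_nhds
  exact norm_le_zero_iff.1
    (ge_of_tendsto hlim (eventually_nhdsWithin_of_forall fun ε hε => hclose ε hε))

lemma ae_eq_zero_of_integral_exp_pow_smul_eq_zero {E : Type*} [NormedAddCommGroup E]
    [NormedSpace ℝ E] [CompleteSpace E] {c : ℝ} (hc : 0 < c) {g : ℝ → E}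
    (hg : IntegrableOn g (Ioi 0)) (h : ∀ n : ℕ, ∫ t in Ioi 0, Real.exp (-(c * t)) ^ n • g t = 0) :
    ∀ᵐ t, t ∈ Ioi 0 → g t = 0 := by
  refine isOpen_Ioi.ae_eq_zero_of_integral_contDiff_smul_eq_zero hg.locallyIntegrableOn
    fun ψ hψ hψc hψU => ?_
  obtain ⟨T, hT⟩ : ∃ T, ∀ t, T ≤ t → ψ t = 0 := by
    obtain ⟨T₀, hT₀⟩ := hψc.isCompact.bddAbove
    exact ⟨T₀ + 1, fun t ht =>
      image_eq_zero_of_notMem_tsupport fun hmem => by linarith [hT₀ hmem]⟩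
  set δ := Real.exp (-(c * T))
  -- `φ (exp (-(c * t))) = ψ t` for all `t`: the `max` only acts where `ψ` already vanishes.
  set φ : ℝ → ℝ := fun x => ψ (-Real.log (max x δ) / c)
  have hφ : Continuous φ := hψ.continuous.comp
    (((continuous_id.max continuous_const).log
      fun x => (lt_max_of_lt_right (exp_pos _)).ne').neg.div_const c)
  have hψφ : ∀ t, ψ t = φ (Real.exp (-(c * t))) := by
    intro t
    rcases le_or_gt t T with htT | htT
    · simp only [φ]
      rw [max_eq_left (exp_le_exp.2 (by nlinarith)), log_exp, neg_neg,
        mul_div_cancel_left₀ _ hc.ne']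
    · simp only [φ]
      rw [max_eq_right (exp_le_exp.2 (by nlinarith)), log_exp, neg_neg,
        mul_div_cancel_left₀ _ hc.ne', hT t htT.le, hT T le_rfl]
  rw [← setIntegral_eq_integral_of_forall_compl_eq_zero fun t ht => by
    rw [image_eq_zero_of_notMem_tsupport fun hmem => ht (hψU hmem), zero_smul]]
  refine (integral_congr_ae (ae_of_all _ fun t => by rw [hψφ t])).trans ?_
  refine integral_comp_smul_eq_zero_of_forall_pow (a := 0) (b := 1) (by fun_prop)
    ((ae_restrict_iff' measurableSet_Ioi).2 (ae_of_all _ fun t ht => ?_)) hg h hφ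
  exact ⟨(exp_pos _).le, exp_le_one_iff.2 (by nlinarith [mem_Ioi.1 ht])⟩

/-- Heisenberg uniqueness for the spiral against the anti-spiral: if `g ∈ L¹[0,∞)` and
`∫₀^∞ e^{-iπ e^{s-t} cos(t-s)} g(t) dt = 0` for all `s ∈ ℝ`, then `g = 0` a.e. -/
theorem spiral_antispiral_HUP (g : ℝ → ℂ) (hg : Integrable g)
    (hsupp : ∀ t < (0 : ℝ), g t = 0)
    (hvanish : ∀ s : ℝ,
      ∫ t in Set.Ioi (0 : ℝ),
        Complex.exp (-(Complex.I * (Real.pi : ℂ) * (Real.exp (s - t) : ℂ) * (Real.cos (t - s) : ℂ)))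
          * g t = 0) :
    g =ᵐ[volume] 0 := by
  have hg₀ : IntegrableOn g (Ioi 0) := hg.integrableOn
  have hmoment : ∀ N, spiralMoment g N = 0 := spiralMoment_eq_zero hg₀ fun s _ => hvanish s
  have hIoi : ∀ᵐ t, t ∈ Ioi 0 → g t = 0 :=
    ae_eq_zero_of_integral_exp_pow_smul_eq_zero two_pos hg₀ fun m =>
      integral_exp_pow_smul_eq_zero_of_spiralMoment_eq_zero hg₀ (hmoment (2 * m))
  have hne : ∀ᵐ t : ℝ, t ≠ 0 := by simp [ae_iff]
  filter_upwards [hIoi, hne] with t htpos htne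
  rcases htne.lt_or_gt with hneg | hpos
  · exact hsupp t hneg
  · exact htpos hpos
end

section
/- Let g ∈ L¹(ℝ) and y₀ ≠ 0. If ∫_ℝ e^{−iπ x cosh t} g(t) dt = 0 for all x ∈ ℝ and ∫_ℝ e^{−iπ(x cosh t + y₀ sinh t)} g(t) dt = 0 for all x ∈ ℝ, then g = 0 a.e. (The pair (hyperbola, two distinct lines parallel to the X-axis) is a Heisenberg uniqueness pair.) -/
/-!
Since `cosh` is even, the first condition says that the transform of the even part
`g t + g (-t)` vanishes. Substituting `u = cosh t` on `t > 0` turns this transform into the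
ordinary Fourier transform of an `L¹` function supported on `(1, ∞)`, so by injectivity of the
Fourier transform on `L¹` the even part vanishes: `g` is odd. The second condition says the same
of `e^{-iπ y₀ sinh t} g t`, and as `sinh` is odd, comparing the two gives
`(e^{-iπ y₀ sinh t} - e^{iπ y₀ sinh t}) g t = 0`; the first factor vanishes only on the countable
set where `y₀ sinh t ∈ ℤ`.
-/

open MeasureTheory Real FourierTransform Set
open Complex (I)
open scoped Complex ContDiff SchwartzMap

theorem Real.ae_eq_zero_of_fourier_eq_zero {V E : Type*} [NormedAddCommGroup V]
    [InnerProductSpace ℝ V] [FiniteDimensional ℝ V] [MeasurableSpace V] [BorelSpace V]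
    [NormedAddCommGroup E] [NormedSpace ℂ E] [CompleteSpace E] {f : V → E} (hf : Integrable f)
    (h : 𝓕 f = 0) : f =ᵐ[volume] 0 := by
  refine ae_eq_zero_of_integral_contDiff_smul_eq_zero hf.locallyIntegrable fun φ hφ hφc => ?_
  let ψ : 𝓢(V, ℂ) := (hφc.comp_left (g := Complex.ofRealCLM) (map_zero _)).toSchwartzMap
    (Complex.ofRealCLM.contDiff.comp hφ)
  let χ : 𝓢(V, ℂ) := 𝓕⁻ ψ
  have hχ : 𝓕 ⇑χ = fun x => (φ x : ℂ) := by
    rw [← SchwartzMap.fourier_coe, FourierInvPair.fourier_fourierInv_eq]; rfl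
  have parseval := VectorFourier.integral_fourierIntegral_smul_eq_flip (L := innerₗ V)
    Real.continuous_fourierChar continuous_inner (χ.integrable (μ := volume)) hf
  rw [flip_innerₗ] at parseval
  calc ∫ x, φ x • f x = ∫ x, 𝓕 ⇑χ x • f x := by simp [hχ]
    _ = ∫ ξ, χ ξ • 𝓕 f ξ := parseval
    _ = 0 := by simp [h]

theorem ae_of_ae_restrict_Ioi_zero_of_neg {P : ℝ → Prop} (hP : ∀ t, P t → P (-t))
    (h : ∀ᵐ t ∂volume.restrict (Ioi 0), P t) : ∀ᵐ t, P t := by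
  rw [restrict_Ioi_eq_restrict_Ici, ae_restrict_iff' measurableSet_Ici] at h
  have hneg := (Measure.measurePreserving_neg volume).quasiMeasurePreserving.ae h
  filter_upwards [h, hneg] with t ht htneg
  rcases le_total 0 t with h0 | h0
  · exact ht h0
  · simpa using hP _ (htneg (neg_nonneg.2 h0))

theorem integral_eq_integral_Ioi_zero_add_comp_neg {E : Type*} [NormedAddCommGroup E]
    [NormedSpace ℝ E] {F : ℝ → E} (hF : Integrable F) :
    ∫ t, F t = ∫ t in Ioi 0, (F t + F (-t)) := by
  rw [integral_add hF.integrableOn hF.comp_neg.integrableOn, integral_comp_neg_Ioi, neg_zero,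
    add_comm, intervalIntegral.integral_Iic_add_Ioi hF.integrableOn hF.integrableOn]

theorem MeasureTheory.Integrable.cexp_mul {α : Type*} [MeasurableSpace α] {μ : Measure α}
    {f : α → ℂ} (hf : Integrable f μ) {θ : α → ℂ} (hθ : Measurable θ) (hre : ∀ a, (θ a).re = 0) :
    Integrable (fun a => cexp (θ a) * f a) μ :=
  hf.bdd_mul (c := 1) (Complex.measurable_exp.comp hθ).aestronglyMeasurable
    (ae_of_all _ fun a => by simp [Complex.norm_exp, hre])

namespace Real

theorem image_arcosh_Ioi_one : arcosh '' Ioi 1 = Ioi 0 := by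
  ext t
  refine ⟨fun ⟨u, hu, hut⟩ => hut ▸ arcosh_pos hu, fun ht => ⟨cosh t, ?_, arcosh_cosh ht.le⟩⟩
  exact one_lt_cosh.2 (ne_of_gt ht)

section

variable {F : Type*} [NormedAddCommGroup F] [NormedSpace ℝ F]

theorem integral_Ioi_zero_eq_integral_comp_arcosh (G : ℝ → F) :
    ∫ t in Ioi 0, G t = ∫ u in Ioi 1, (√(u ^ 2 - 1))⁻¹ • G (arcosh u) := by
  rw [← image_arcosh_Ioi_one, integral_image_eq_integral_abs_deriv_smul measurableSet_Ioi
    (fun _ hu => (hasDerivAt_arcosh hu).hasDerivWithinAt) (arcosh_injOn.mono Ioi_subset_Ici_self)]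
  simp only [abs_inv, abs_of_nonneg (sqrt_nonneg _)]

theorem integrableOn_Ioi_zero_iff_comp_arcosh (G : ℝ → F) :
    IntegrableOn G (Ioi 0) ↔ IntegrableOn (fun u => (√(u ^ 2 - 1))⁻¹ • G (arcosh u)) (Ioi 1) := by
  rw [← image_arcosh_Ioi_one, integrableOn_image_iff_integrableOn_abs_deriv_smul measurableSet_Ioi
    (fun _ hu => (hasDerivAt_arcosh hu).hasDerivWithinAt) (arcosh_injOn.mono Ioi_subset_Ici_self)]
  simp only [abs_inv, abs_of_nonneg (sqrt_nonneg _)]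

end

theorem ae_restrict_Ioi_zero_eq_zero_of_comp_arcosh {F : Type*} [NormedAddCommGroup F]
    {h : ℝ → F} (hh : IntegrableOn h (Ioi 0))
    (h0 : ∀ᵐ u ∂volume.restrict (Ioi 1), h (arcosh u) = 0) : h =ᵐ[volume.restrict (Ioi 0)] 0 := by
  have hnorm : ∫ t in Ioi 0, ‖h t‖ = 0 := by
    rw [integral_Ioi_zero_eq_integral_comp_arcosh]
    refine integral_eq_zero_of_ae (h0.mono fun u hu => ?_)
    simp [hu]
  exact ((setIntegral_eq_zero_iff_of_nonneg_ae (ae_of_all _ fun t => norm_nonneg (h t))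
    hh.norm).1 hnorm).mono fun t ht => norm_eq_zero.1 ht

theorem ae_restrict_Ioi_zero_eq_zero_of_integral_cexp_cosh_mul_eq_zero {h : ℝ → ℂ}
    (hh : IntegrableOn h (Ioi 0))
    (hv : ∀ x : ℝ, ∫ t in Ioi 0, cexp (-(I * π * x * Real.cosh t)) * h t = 0) :
    h =ᵐ[volume.restrict (Ioi 0)] 0 := by
  -- the density of the push-forward of `h t dt` on `(0, ∞)` under `cosh`
  set H : ℝ → ℂ := (Ioi 1).indicator fun u => (√(u ^ 2 - 1))⁻¹ • h (arcosh u)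
  have hH : Integrable H :=
    (integrable_indicator_iff measurableSet_Ioi).2 ((integrableOn_Ioi_zero_iff_comp_arcosh h).1 hh)
  have hFH : 𝓕 H = 0 := by
    ext ξ
    calc 𝓕 H ξ
        = ∫ u in Ioi 1, cexp (↑(-2 * π * u * ξ) * I) • ((√(u ^ 2 - 1))⁻¹ • h (arcosh u)) := by
          rw [fourier_real_eq_integral_exp_smul, ← integral_indicator measurableSet_Ioi]
          congr 1 with u
          by_cases hu : u ∈ Ioi 1 <;> simp [H, hu]
      _ = ∫ u in Ioi 1, (√(u ^ 2 - 1))⁻¹ •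
            (cexp (-(I * π * ↑(2 * ξ) * Real.cosh (arcosh u))) * h (arcosh u)) := by
          refine setIntegral_congr_fun measurableSet_Ioi fun u hu => ?_
          rw [cosh_arcosh (mem_Ioi.1 hu).le, smul_comm, smul_eq_mul]
          push_cast
          ring_nf
      _ = 0 := by
          rw [← integral_Ioi_zero_eq_integral_comp_arcosh
            (fun t => cexp (-(I * π * ↑(2 * ξ) * Real.cosh t)) * h t), hv]
  have hH0 := ae_eq_zero_of_fourier_eq_zero hH hFH
  refine ae_restrict_Ioi_zero_eq_zero_of_comp_arcosh hh ?_
  rw [ae_restrict_iff' measurableSet_Ioi]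
  filter_upwards [hH0] with u hu hu1
  have hs : √(u ^ 2 - 1) ≠ 0 := sqrt_ne_zero'.2 (by nlinarith [mem_Ioi.1 hu1])
  simpa [H, indicator_of_mem hu1, hs] using hu

theorem ae_neg_eq_neg_of_integral_cexp_cosh_mul_eq_zero {f : ℝ → ℂ} (hf : Integrable f)
    (hv : ∀ x : ℝ, ∫ t, cexp (-(I * π * x * Real.cosh t)) * f t = 0) :
    ∀ᵐ t, f (-t) = -f t := by
  have heven : ∀ x : ℝ,
      ∫ t in Ioi 0, cexp (-(I * π * x * Real.cosh t)) * (f t + f (-t)) = 0 := by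
    intro x
    rw [← hv x, integral_eq_integral_Ioi_zero_add_comp_neg (hf.cexp_mul (by fun_prop) (by simp))]
    congr 1 with t
    rw [cosh_neg]
    ring
  have hzero := ae_restrict_Ioi_zero_eq_zero_of_integral_cexp_cosh_mul_eq_zero
    (hf.add hf.comp_neg).integrableOn heven
  refine ae_of_ae_restrict_Ioi_zero_of_neg (fun t ht => by rw [neg_neg, ht, neg_neg]) ?_
  filter_upwards [hzero] with t (ht : f t + f (-t) = 0)
  linear_combination ht

theorem ae_cexp_neg_sinh_ne_cexp_sinh {y : ℝ} (hy : y ≠ 0) :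
    ∀ᵐ t : ℝ, cexp (-(I * π * y * Real.sinh t)) ≠ cexp (I * π * y * Real.sinh t) := by
  filter_upwards [(countable_range fun n : ℤ => arsinh (n / y)).ae_notMem volume] with t ht heq
  obtain ⟨n, hn⟩ := Complex.exp_eq_exp_iff_exists_int.1 heq
  have hprod : ((y * Real.sinh t + n : ℝ) : ℂ) * (2 * π * I) = 0 := by
    simp only [Complex.ofReal_add, Complex.ofReal_mul, Complex.ofReal_intCast]
    linear_combination -hn
  have hsum : y * Real.sinh t + n = 0 := by
    exact_mod_cast (mul_eq_zero.1 hprod).resolve_right (by simp [pi_ne_zero])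
  refine ht ⟨-n, show arsinh (((-n : ℤ) : ℝ) / y) = t from ?_⟩
  rw [Int.cast_neg, ← eq_neg_of_add_eq_zero_left hsum, mul_div_cancel_left₀ _ hy, arsinh_sinh]

end Real

/-- The hyperbola `{(cosh t, sinh t) : t ∈ ℝ}` together with two distinct lines parallel to
the `X`-axis (`y = 0` and `y = y₀`, `y₀ ≠ 0`) is a Heisenberg uniqueness pair: if the Fourier
transform of `g(t)dt` on the hyperbola vanishes on both lines, then `g = 0` a.e. -/
theorem hyperbola_two_horizontal_lines_HUP (g : ℝ → ℂ) (hg : Integrable g)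
    (y₀ : ℝ) (hy₀ : y₀ ≠ 0)
    (h1 : ∀ x : ℝ,
      ∫ t : ℝ, Complex.exp (-(Complex.I * (Real.pi : ℂ) * (x : ℂ) * (Real.cosh t : ℂ)))
        * g t = 0)
    (h2 : ∀ x : ℝ,
      ∫ t : ℝ, Complex.exp (-(Complex.I * (Real.pi : ℂ)
        * ((x : ℂ) * (Real.cosh t : ℂ) + (y₀ : ℂ) * (Real.sinh t : ℂ)))) * g t = 0) :
    g =ᵐ[volume] 0 := by
  have hg_odd := ae_neg_eq_neg_of_integral_cexp_cosh_mul_eq_zero hg h1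
  have hφg_odd := ae_neg_eq_neg_of_integral_cexp_cosh_mul_eq_zero
    (f := fun t => cexp (-(I * π * y₀ * Real.sinh t)) * g t) (hg.cexp_mul (by fun_prop) (by simp))
    fun x => by
      rw [← h2 x]
      congr 1 with t
      rw [← mul_assoc, ← Complex.exp_add]
      ring_nf
  filter_upwards [hg_odd, hφg_odd, ae_cexp_neg_sinh_ne_cexp_sinh hy₀] with t hgt hφgt hne
  simp only [sinh_neg, Complex.ofReal_neg, mul_neg, neg_neg, hgt] at hφgt
  have hfac :
      (cexp (-(I * π * y₀ * Real.sinh t)) - cexp (I * π * y₀ * Real.sinh t)) * g t = 0 := by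
    linear_combination hφgt
  exact (mul_eq_zero.1 hfac).resolve_left (sub_ne_zero.2 hne)
end

section
/- Let g ∈ L¹(ℝ), x₀ ≠ 0. If ∫_ℝ e^{−iπ y e^{t²}} g(t) dt = 0 for all y ∈ ℝ and ∫_ℝ e^{−iπ(x₀ t + y e^{t²})} g(t) dt = 0 for all y ∈ ℝ, then g = 0 a.e. (The exponential curve Γ = {(t, e^{t²})} paired with two distinct vertical lines is a Heisenberg uniqueness pair.) -/
/-!
Vanishing of the transform on the line `x = 0` says that the push-forward of `g(t) dt` under
`t ↦ e^{t²}` has zero Fourier transform, so it annihilates every Schwartz function `ψ`. Taking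
`ψ = η ∘ √ ∘ log` with `η` even, smooth, compactly supported and vanishing near `0` gives
`∫ η g = 0` for all such `η`, which forces `g` to be odd. The line `x = x₀` says the same of
`e^{-iπx₀t} g(t)`, and both being odd gives `(e^{iπx₀t} - e^{-iπx₀t}) g(t) = 0`; the first
factor vanishes only on the null set `x₀⁻¹ ℤ`.
-/

open MeasureTheory Real FourierTransform
open Complex (I)
open scoped ContDiff SchwartzMap Complex

lemma sqrt_log_lt_of_abs_lt_exp_sq {u ε : ℝ} (hε : 0 < ε) (hu : |u| < rexp (ε ^ 2)) :
    √(log u) < ε := by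
  rw [Real.sqrt_lt' hε, ← log_abs]
  rcases eq_or_ne u 0 with rfl | hu0
  · simpa using pow_pos hε 2
  · exact (log_lt_iff_lt_exp (abs_pos.2 hu0)).2 hu

lemma lt_sqrt_log_of_exp_sq_lt_abs {u R : ℝ} (hR : 0 ≤ R) (hu : rexp (R ^ 2) < |u|) :
    R < √(log u) := by
  rw [Real.lt_sqrt hR, ← log_abs]
  exact (lt_log_iff_exp_lt ((exp_pos _).trans hu)).2 hu

theorem ContDiff.comp_sqrt_log {E : Type*} [NormedAddCommGroup E] [NormedSpace ℝ E] {η : ℝ → E}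
    {n : WithTop ℕ∞} (hη : ContDiff ℝ n η) (h0 : 0 ∉ tsupport η) :
    ContDiff ℝ n fun u => η √(Real.log u) := by
  obtain ⟨ε, hε, hηε⟩ := Metric.eventually_nhds_iff.1 (notMem_tsupport_iff_eventuallyEq.1 h0)
  refine contDiff_iff_contDiffAt.2 fun u => ?_
  rcases lt_or_ge |u| (rexp (ε ^ 2)) with hu | hu
  · refine (contDiffAt_const (c := (0 : E))).congr_of_eventuallyEq ?_
    filter_upwards [(continuous_abs.isOpen_preimage _ isOpen_Iio).mem_nhds hu] with v hv
    refine hηε ?_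
    rw [Real.dist_eq, sub_zero, abs_of_nonneg (Real.sqrt_nonneg _)]
    exact sqrt_log_lt_of_abs_lt_exp_sq hε hv
  · have hlog : 0 < Real.log u := by
      rw [← log_abs]
      exact log_pos ((one_lt_exp_iff.2 (pow_pos hε 2)).trans_le hu)
    have hu0 : u ≠ 0 := by rintro rfl; simp at hlog
    exact hη.contDiffAt.comp u
      ((Real.contDiffAt_sqrt hlog.ne').comp u (Real.contDiffAt_log.2 hu0))

theorem HasCompactSupport.comp_sqrt_log {M : Type*} [Zero M] {η : ℝ → M}
    (hη : HasCompactSupport η) :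
    HasCompactSupport fun u => η √(Real.log u) := by
  obtain ⟨R, hR, hηR⟩ := hη.isCompact.isBounded.exists_pos_norm_le
  refine HasCompactSupport.intro (isCompact_closedBall 0 (rexp (R ^ 2))) fun u hu => ?_
  rw [Metric.mem_closedBall, dist_zero_right, not_le, Real.norm_eq_abs] at hu
  refine image_eq_zero_of_notMem_tsupport fun hmem => ?_
  have := hηR _ hmem
  rw [Real.norm_eq_abs, abs_of_nonneg (Real.sqrt_nonneg _)] at this
  exact this.not_gt (lt_sqrt_log_of_exp_sq_lt_abs hR.le hu)

theorem SchwartzMap.integral_comp_mul_eq_zero {α : Type*} [MeasurableSpace α] {μ : Measure α}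
    [SFinite μ] {g : α → ℂ} (hg : Integrable g μ) {φ : α → ℝ} (hφ : Measurable φ)
    (h : ∀ y : ℝ, ∫ t, cexp (-(I * π * y * φ t)) * g t ∂μ = 0) (ψ : 𝓢(ℝ, ℂ)) :
    ∫ t, ψ (φ t) * g t ∂μ = 0 := by
  have inversion (u : ℝ) :
      ψ u = ∫ ξ : ℝ, cexp (-(I * π * ((-2 * ξ : ℝ) : ℂ) * u)) * 𝓕 (ψ : ℝ → ℂ) ξ := by
    rw [← congrFun (ψ.continuous.fourierInv_fourier_eq ψ.integrable (𝓕 ψ).integrable) u,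
      Real.fourierInv_eq']
    refine integral_congr_ae (.of_forall fun ξ => ?_)
    simp only [RCLike.inner_apply, conj_trivial, smul_eq_mul]
    push_cast
    ring_nf
  set F : α → ℝ → ℂ := fun t ξ =>
    𝓕 (ψ : ℝ → ℂ) ξ * (cexp (-(I * π * ((-2 * ξ : ℝ) : ℂ) * φ t)) * g t)
  have hF : Integrable (Function.uncurry F) (μ.prod volume) := by
    refine ((hg.mul_prod (𝓕 ψ).integrable).bdd_mul (c := 1)
      (f := fun p : α × ℝ => cexp (-(I * π * ((-2 * p.2 : ℝ) : ℂ) * φ p.1)))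
      (by fun_prop) (.of_forall fun p => by simp [Complex.norm_exp])).congr
      (.of_forall fun p => ?_)
    simp only [F, Function.uncurry, fourier_coe]
    ring
  calc ∫ t, ψ (φ t) * g t ∂μ = ∫ t, (∫ ξ, F t ξ) ∂μ := by
        refine integral_congr_ae (.of_forall fun t => ?_)
        simp only [F, inversion (φ t), ← integral_mul_const]
        refine integral_congr_ae (.of_forall fun ξ => ?_)
        ring
    _ = ∫ ξ, ∫ t, F t ξ ∂μ := integral_integral_swap hF
    _ = 0 := by simp only [F, integral_const_mul, h, mul_zero, integral_zero]

theorem integral_smul_eq_zero_of_even {g : ℝ → ℂ} (hg : Integrable g)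
    (h : ∀ y : ℝ, ∫ t : ℝ, cexp (-(I * π * y * (rexp (t ^ 2) : ℂ))) * g t = 0)
    {η : ℝ → ℝ} (hη : ContDiff ℝ ∞ η) (hηc : HasCompactSupport η) (h0 : 0 ∉ tsupport η)
    (heven : Function.Even η) :
    ∫ t, η t • g t = 0 := by
  have hη' : ContDiff ℝ ∞ fun x => (η x : ℂ) := Complex.ofRealCLM.contDiff.comp hη
  have hηc' : HasCompactSupport fun x => (η x : ℂ) := hηc.comp_left Complex.ofReal_zero
  have h0' : (0 : ℝ) ∉ tsupport fun x => (η x : ℂ) :=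
    fun h => h0 (tsupport_comp_subset Complex.ofReal_zero η h)
  let ψ : 𝓢(ℝ, ℂ) := hηc'.comp_sqrt_log.toSchwartzMap (hη'.comp_sqrt_log h0')
  have hψ (t : ℝ) : ψ (rexp (t ^ 2)) = η t := by
    change (η √(Real.log (rexp (t ^ 2))) : ℂ) = η t
    rw [Real.log_exp, Real.sqrt_sq_eq_abs]
    rcases abs_choice t with ht | ht <;> simp only [ht, heven t]
  rw [← SchwartzMap.integral_comp_mul_eq_zero hg (φ := fun t => rexp (t ^ 2)) (by fun_prop) h ψ]
  simp only [hψ, Complex.real_smul]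

theorem ae_odd_of_integral_cexp_exp_sq_mul_eq_zero {g : ℝ → ℂ} (hg : Integrable g)
    (h : ∀ y : ℝ, ∫ t : ℝ, cexp (-(I * π * y * (rexp (t ^ 2) : ℂ))) * g t = 0) :
    ∀ᵐ t, g (-t) = -g t := by
  have hsum : ∀ᵐ t, t ∈ ({0}ᶜ : Set ℝ) → g t + g (-t) = 0 := by
    refine isOpen_compl_singleton.ae_eq_zero_of_integral_contDiff_smul_eq_zero
      ((hg.add hg.comp_neg).locallyIntegrable.locallyIntegrableOn _) fun χ hχ hχc hχ0 => ?_
    have h0 : (0 : ℝ) ∉ tsupport χ := fun h => hχ0 h rfl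
    have hχc' : HasCompactSupport fun s => χ (-s) := hχc.comp_homeomorph (Homeomorph.neg ℝ)
    have integrable_smul {f : ℝ → ℂ} (hf : Integrable f) {φ : ℝ → ℝ} (hφ : Continuous φ)
        (hφc : HasCompactSupport φ) : Integrable fun t => φ t • f t :=
      hf.locallyIntegrable.integrable_smul_left_of_hasCompactSupport hφ hφc
    -- testing `g(t) + g(-t)` against `χ` is testing `g` against the even `χ(t) + χ(-t)`
    have heven : ∫ t, (χ t + χ (-t)) • g t = 0 := by
      refine integral_smul_eq_zero_of_even hg h (hχ.add (hχ.comp contDiff_neg)) (hχc.add hχc')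
        ?_ fun s => by simp only [neg_neg, add_comm]
      rw [notMem_tsupport_iff_eventuallyEq] at h0 ⊢
      filter_upwards [h0, (continuous_neg.tendsto' (0 : ℝ) 0 neg_zero).eventually h0]
        with s hs hs'
      simp only [hs, hs', Pi.zero_apply, add_zero]
    calc ∫ t, χ t • (g t + g (-t))
        = (∫ t, χ t • g t) + ∫ t, χ t • g (-t) := by
          simp only [smul_add]
          exact integral_add (integrable_smul hg hχ.continuous hχc)
            (integrable_smul hg.comp_neg hχ.continuous hχc)
      _ = (∫ t, χ t • g t) + ∫ t, χ (-t) • g t := by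
          rw [← integral_neg_eq_self (fun t => χ t • g (-t))]
          simp only [neg_neg]
      _ = ∫ t, (χ t + χ (-t)) • g t := by
          simp only [add_smul]
          exact (integral_add (integrable_smul hg hχ.continuous hχc)
            (integrable_smul hg (hχ.continuous.comp continuous_neg) hχc')).symm
      _ = 0 := heven
  filter_upwards [hsum, Measure.ae_ne volume 0] with t ht ht0
  exact eq_neg_of_add_eq_zero_right (ht ht0)

theorem ae_eq_zero_of_odd_of_mul_odd {α : Type*} [Neg α] [MeasurableSpace α] {μ : Measure α}
    {g c : α → ℂ} (hg : ∀ᵐ t ∂μ, g (-t) = -g t)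
    (hcg : ∀ᵐ t ∂μ, c (-t) * g (-t) = -(c t * g t)) (hc : ∀ᵐ t ∂μ, c (-t) ≠ c t) :
    g =ᵐ[μ] 0 := by
  filter_upwards [hg, hcg, hc] with t hgt hcgt hct
  rw [hgt] at hcgt
  have : (c (-t) - c t) * g t = 0 := by linear_combination -hcgt
  exact (mul_eq_zero.1 this).resolve_left (sub_ne_zero.2 hct)

theorem ae_cexp_I_mul_ne_cexp_neg_I_mul {x₀ : ℝ} (hx₀ : x₀ ≠ 0) :
    ∀ᵐ t : ℝ, cexp (I * π * x₀ * t) ≠ cexp (-(I * π * x₀ * t)) := by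
  filter_upwards [(Set.countable_range fun n : ℤ => n / x₀).ae_notMem volume] with t ht heq
  obtain ⟨n, hn⟩ := Complex.exp_eq_exp_iff_exists_int.1 heq
  have hxt : ((x₀ * t : ℝ) : ℂ) = n := by
    push_cast
    apply mul_left_cancel₀ (by simp [Real.pi_ne_zero, Complex.I_ne_zero] : 2 * I * π ≠ 0)
    linear_combination hn
  exact ht ⟨n, by rw [div_eq_iff hx₀]; exact_mod_cast (mul_comm x₀ t ▸ hxt).symm⟩

/-- The exponential curve `{(t, e^{t²}) : t ∈ ℝ}` together with the two vertical lines
`x = 0` and `x = x₀` (`x₀ ≠ 0`) is a Heisenberg uniqueness pair: if the Fourier transform of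
`g(t)dt` on the curve vanishes on both lines, then `g = 0` a.e. -/
theorem exp_curve_two_vertical_lines_HUP (g : ℝ → ℂ) (hg : Integrable g)
    (x₀ : ℝ) (hx₀ : x₀ ≠ 0)
    (h1 : ∀ y : ℝ,
      ∫ t : ℝ, Complex.exp (-(Complex.I * (Real.pi : ℂ) * (y : ℂ) * (Real.exp (t ^ 2) : ℂ)))
        * g t = 0)
    (h2 : ∀ y : ℝ,
      ∫ t : ℝ, Complex.exp (-(Complex.I * (Real.pi : ℂ)
        * ((x₀ : ℂ) * (t : ℂ) + (y : ℂ) * (Real.exp (t ^ 2) : ℂ)))) * g t = 0) :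
    g =ᵐ[volume] 0 := by
  set c : ℝ → ℂ := fun t => cexp (-(I * π * x₀ * t))
  have hcg : Integrable fun t => c t * g t :=
    hg.bdd_mul (c := 1) (by fun_prop) (.of_forall fun t => by simp [c, Complex.norm_exp])
  have h2' (y : ℝ) : ∫ t, cexp (-(I * π * y * (rexp (t ^ 2) : ℂ))) * (c t * g t) = 0 := by
    rw [← h2 y]
    refine integral_congr_ae (.of_forall fun t => ?_)
    simp only [c, ← mul_assoc, ← Complex.exp_add]
    ring_nf
  refine ae_eq_zero_of_odd_of_mul_odd (ae_odd_of_integral_cexp_exp_sq_mul_eq_zero hg h1)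
    (ae_odd_of_integral_cexp_exp_sq_mul_eq_zero hcg h2') ?_
  filter_upwards [ae_cexp_I_mul_ne_cexp_neg_I_mul hx₀] with t ht
  simpa [c] using ht
end

section
/- Let a, b, c be distinct nonzero complex numbers and p ≥ 3 a natural number. The unique solution (τ₀, τ₁, τ₂) of the Vandermonde system τ₀ + aτ₁ + a²τ₂ = −a^p, τ₀ + bτ₁ + b²τ₂ = −b^p, τ₀ + cτ₁ + c²τ₂ = −c^p is given by τ₂ = −H_{p−2}(a,b,c), τ₀ = −abc·H_{p−3}(a,b,c), where H_k denotes the complete homogeneous symmetric polynomial of degree k in three variables (with H_{−1} := 0, H₀ := 1). -/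
open Finset

/-- The complete homogeneous symmetric polynomial of degree `k` in three variables:
`H_k(a,b,c) = Σ_{l+m+n=k, l,m,n ≥ 0} a^l b^m c^n`. -/
noncomputable def Hsym (k : ℕ) (a b c : ℂ) : ℂ :=
  ∑ l ∈ Finset.range (k + 1), ∑ m ∈ Finset.range (k + 1 - l), a ^ l * b ^ m * c ^ (k - l - m)

lemma hsym_rec (k : ℕ) (a b c : ℂ) :
    Hsym (k + 1) a b c =
      (∑ l ∈ Finset.range (k + 2), a ^ l * b ^ (k + 1 - l)) + c * Hsym k a b c := by
  unfold Hsym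
  have step : ∀ l ∈ Finset.range (k + 2),
      ∑ m ∈ Finset.range (k + 1 + 1 - l), a ^ l * b ^ m * c ^ (k + 1 - l - m)
        = a ^ l * b ^ (k + 1 - l) + c * ∑ m ∈ Finset.range (k + 1 - l), a ^ l * b ^ m * c ^ (k - l - m) := by
    intro l hl
    simp only [Finset.mem_range] at hl
    have h1 : k + 1 + 1 - l = (k + 1 - l) + 1 := by omega
    rw [h1, Finset.sum_range_succ]
    have h2 : k + 1 - l - (k + 1 - l) = 0 := by omega
    rw [h2, Finset.mul_sum]
    have h3 : ∀ m ∈ Finset.range (k + 1 - l),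
        a ^ l * b ^ m * c ^ (k + 1 - l - m) = c * (a ^ l * b ^ m * c ^ (k - l - m)) := by
      intro m hm
      simp only [Finset.mem_range] at hm
      have h4 : k + 1 - l - m = (k - l - m) + 1 := by omega
      rw [h4, pow_succ]; ring
    rw [Finset.sum_congr rfl h3]
    ring
  rw [Finset.sum_congr rfl step, Finset.sum_add_distrib]
  congr 1
  rw [Finset.sum_range_succ]
  simp only [Nat.add_sub_cancel_left, Nat.sub_self, Finset.range_zero, Finset.sum_empty,
    mul_zero, add_zero]
  rw [Finset.mul_sum]

lemma hsym_key (k : ℕ) (a b c : ℂ) :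
    (a - b) * (b - c) * (c - a) * Hsym k a b c =
      -(a ^ (k + 2) * (b - c) + b ^ (k + 2) * (c - a) + c ^ (k + 2) * (a - b)) := by
  induction k with
  | zero => simp [Hsym]; ring
  | succ k ih =>
      rw [hsym_rec]
      have hg : (∑ l ∈ Finset.range (k + 2), a ^ l * b ^ (k + 1 - l)) * (a - b)
          = a ^ (k + 2) - b ^ (k + 2) := by
        have := geom_sum₂_mul a b (k + 2)
        simpa using this
      linear_combination (b - c) * (c - a) * hg + c * ih

/-- For distinct nonzero `a, b, c` and `p ≥ 3`, the unique solution of the Vandermonde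
system `τ₀ + xτ₁ + x²τ₂ = -x^p` (`x = a, b, c`) satisfies `τ₂ = -H_{p-2}(a,b,c)` and
`τ₀ = -abc·H_{p-3}(a,b,c)`. -/
theorem vandermonde_solution_symmetric (a b c : ℂ)
    (ha : a ≠ 0) (hb : b ≠ 0) (hc : c ≠ 0)
    (hab : a ≠ b) (hbc : b ≠ c) (hac : a ≠ c)
    (p : ℕ) (hp : 3 ≤ p) (τ₀ τ₁ τ₂ : ℂ)
    (e1 : τ₀ + a * τ₁ + a ^ 2 * τ₂ = -a ^ p)
    (e2 : τ₀ + b * τ₁ + b ^ 2 * τ₂ = -b ^ p)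
    (e3 : τ₀ + c * τ₁ + c ^ 2 * τ₂ = -c ^ p) :
    τ₂ = -Hsym (p - 2) a b c ∧ τ₀ = -(a * b * c * Hsym (p - 3) a b c) := by
  have hV : (a - b) * (b - c) * (c - a) ≠ 0 := by
    apply mul_ne_zero (mul_ne_zero (sub_ne_zero.mpr hab) (sub_ne_zero.mpr hbc))
    exact sub_ne_zero.mpr (Ne.symm hac)
  have key2 := hsym_key (p - 2) a b c
  rw [show p - 2 + 2 = p by omega] at key2
  have key3 := hsym_key (p - 3) a b c
  rw [show p - 3 + 2 = p - 1 by omega] at key3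
  have hA : a * a ^ (p - 1) = a ^ p := by
    rw [← pow_succ']; congr 1; omega
  have hB : b * b ^ (p - 1) = b ^ p := by
    rw [← pow_succ']; congr 1; omega
  have hC : c * c ^ (p - 1) = c ^ p := by
    rw [← pow_succ']; congr 1; omega
  constructor
  · apply mul_left_cancel₀ hV
    linear_combination (-(b - c)) * e1 + (-(c - a)) * e2 + (-(a - b)) * e3 + key2
  · apply mul_left_cancel₀ hV
    linear_combination (b * c * (c - b)) * e1 + (a * c * (a - c)) * e2 +
      (a * b * (b - a)) * e3 + (a * b * c) * key3 +
      (-(b * c * (b - c))) * hA + (-(a * c * (c - a))) * hB + (-(a * b * (a - b))) * hC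
end

section
/- Let a, b, c, d be complex numbers of modulus 1, pairwise distinct, and p ≥ 3 an integer with H_{p−2}(a,b,c) ≠ H_{p−2}(a,b,d). Then the 4×4 matrix with rows (1, x, x², x^p) for x ∈ {a, b, c, d} is invertible. -/
open Finset

theorem sum_pow_mul_pow_succ_sub_mul_sub {R : Type*} [CommRing R] (x y : R) (k : ℕ) :
    (∑ l ∈ range (k + 1), x ^ l * y ^ (k + 1 - l)) * (x - y) = y * (x ^ (k + 1) - y ^ (k + 1)) := by
  have hsum : ∑ l ∈ range (k + 1), x ^ l * y ^ (k + 1 - l) =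
      y * ∑ l ∈ range (k + 1), x ^ l * y ^ (k + 1 - 1 - l) := by
    rw [mul_sum]
    refine sum_congr rfl fun l hl => ?_
    rw [show k + 1 - l = k + 1 - 1 - l + 1 by grind, pow_succ]
    ring
  rw [hsum, mul_assoc, geom_sum₂_mul]

theorem Hsym_mul_sub (k : ℕ) (a b c : ℂ) :
    Hsym k a b c * (b - c) =
      ∑ l ∈ range (k + 1), a ^ l * b ^ (k + 1 - l) - ∑ l ∈ range (k + 1), a ^ l * c ^ (k + 1 - l) := by
  rw [Hsym, sum_mul, ← sum_sub_distrib]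
  refine sum_congr rfl fun l _ => ?_
  rw [← mul_sub, ← geom_sum₂_mul, ← mul_assoc, mul_sum]
  congr 1
  refine sum_congr rfl fun m _ => ?_
  rw [show k + 1 - l - 1 - m = k - l - m by omega]
  ring

theorem Hsym_mul_vandermonde (k : ℕ) (a b c : ℂ) :
    Hsym k a b c * ((a - b) * (a - c) * (b - c)) =
      (b - c) * a ^ (k + 2) - (a - c) * b ^ (k + 2) + (a - b) * c ^ (k + 2) := by
  linear_combination (a - b) * (a - c) * Hsym_mul_sub k a b c
    + (a - c) * sum_pow_mul_pow_succ_sub_mul_sub a b k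
    - (a - b) * sum_pow_mul_pow_succ_sub_mul_sub a c k

theorem det_one_x_sq_mul_sub {R : Type*} [CommRing R] (a b c d u v w z : R) :
    Matrix.det !![1, a, a ^ 2, u; 1, b, b ^ 2, v; 1, c, c ^ 2, w; 1, d, d ^ 2, z] * (a - b) =
      ((b - c) * u - (a - c) * v + (a - b) * w) * ((a - b) * (a - d) * (b - d)) -
      ((b - d) * u - (a - d) * v + (a - b) * z) * ((a - b) * (a - c) * (b - c)) := by
  simp [Matrix.det_succ_row_zero, Fin.sum_univ_succ, Fin.succAbove]
  ring

theorem det_mul_sub_eq_Hsym_sub (a b c d : ℂ) {p : ℕ} (hp : 2 ≤ p) :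
    Matrix.det !![1, a, a ^ 2, a ^ p; 1, b, b ^ 2, b ^ p; 1, c, c ^ 2, c ^ p; 1, d, d ^ 2, d ^ p]
        * (a - b) =
      (a - b) * (a - c) * (b - c) * ((a - b) * (a - d) * (b - d)) *
        (Hsym (p - 2) a b c - Hsym (p - 2) a b d) := by
  obtain ⟨k, rfl⟩ := Nat.exists_eq_add_of_le' hp
  rw [det_one_x_sq_mul_sub, Nat.add_sub_cancel]
  linear_combination (-((a - b) * (a - d) * (b - d))) * Hsym_mul_vandermonde k a b c
    + (a - b) * (a - c) * (b - c) * Hsym_mul_vandermonde k a b d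

theorem four_lines_matrix_invertible_general (a b c d : ℂ)
    (hab : a ≠ b) (hac : a ≠ c) (had : a ≠ d)
    (hbc : b ≠ c) (hbd : b ≠ d)
    (p : ℕ) (hp : 3 ≤ p)
    (hH : Hsym (p - 2) a b c ≠ Hsym (p - 2) a b d) :
    IsUnit (!![1, a, a ^ 2, a ^ p;
               1, b, b ^ 2, b ^ p;
               1, c, c ^ 2, c ^ p;
               1, d, d ^ 2, d ^ p] : Matrix (Fin 4) (Fin 4) ℂ) := by
  rw [Matrix.isUnit_iff_isUnit_det, isUnit_iff_ne_zero]
  intro hdet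
  have h := det_mul_sub_eq_Hsym_sub a b c d (by omega : 2 ≤ p)
  rw [hdet, zero_mul, eq_comm] at h
  simp only [mul_eq_zero, sub_eq_zero, hab, hac, had, hbc, hbd, or_false, false_or] at h
  exact hH h

/-- For pairwise distinct unimodular `a, b, c, d` and `p ≥ 3` with
`H_{p-2}(a,b,c) ≠ H_{p-2}(a,b,d)`, the matrix with rows `(1, x, x², x^p)`, `x ∈ {a,b,c,d}`,
is invertible. -/
theorem four_lines_matrix_invertible (a b c d : ℂ)
    (ha : ‖a‖ = 1) (hb : ‖b‖ = 1)
    (hc : ‖c‖ = 1) (hd : ‖d‖ = 1)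
    (hab : a ≠ b) (hac : a ≠ c) (had : a ≠ d)
    (hbc : b ≠ c) (hbd : b ≠ d) (hcd : c ≠ d)
    (p : ℕ) (hp : 3 ≤ p)
    (hH : Hsym (p - 2) a b c ≠ Hsym (p - 2) a b d) :
    IsUnit (!![1, a, a ^ 2, a ^ p;
               1, b, b ^ 2, b ^ p;
               1, c, c ^ 2, c ^ p;
               1, d, d ^ 2, d ^ p] : Matrix (Fin 4) (Fin 4) ℂ) :=
  four_lines_matrix_invertible_general a b c d hab hac had hbc hbd p hp hH
end

section
/- With notation from the Wiener lemma setting: if ψ : E → ℂ satisfies ψ(ξ) ≠ 0 and agrees with φ̂ on I_ξ ∩ E for some φ ∈ L¹(ℝ) (ψ ∈ L_loc^{E,ξ}), then there exist an interval I'_ξ ∋ ξ and functions φ₀, φ₁ ∈ L¹(ℝ) such that ψ² + φ̂₁ψ + φ̂₀ = 0 on I'_ξ ∩ E; i.e., L_loc^{E,ξ} ⊆ P^{1,2}[L_loc^{E,ξ}]. Moreover for any integer p ≥ 3, P^{1,2}[L_loc^{E,ξ}] ⊆ P^{1,p}[L_loc^{E,ξ}], where membership in P^{1,p} means ψ^p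 + φ̂₂ψ² + φ̂₁ψ + φ̂₀ = 0 on I_ξ ∩ E for some φ₀, φ₁, φ₂ ∈ L¹(ℝ). -/
/-!
Since `ψ = φ̂` near `ξ`, the relation `ψ² - φ̂ ψ = 0` gives the first inclusion. For the second,
the quadratic relation `ψ² = -φ̂₁ ψ - φ̂₀` lets one rewrite `ψ^p = α̂ ψ + β̂` by induction on `p`;
the coefficients stay Fourier transforms of `L¹` functions because `f̂ ĝ = (f ⋆ g)^`.
-/

open MeasureTheory

/-- Fourier transform with the paper's normalization `ĝ(x) = ∫ e^{-iπxt} g(t) dt`. -/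
noncomputable def paperFT (g : ℝ → ℂ) (x : ℝ) : ℂ :=
  ∫ t : ℝ, Complex.exp (-(Complex.I * (Real.pi : ℂ) * (x : ℂ) * (t : ℂ))) * g t

/-- `ψ ∈ L_loc^{E,ξ}`: `ψ(ξ) ≠ 0` and `ψ` agrees with the Fourier transform of an
integrable function on `I ∩ E` for some open interval `I ∋ ξ`. -/
def MemLloc (E : Set ℝ) (ξ : ℝ) (ψ : ℝ → ℂ) : Prop :=
  ψ ξ ≠ 0 ∧ ∃ a b : ℝ, a < ξ ∧ ξ < b ∧ ∃ φ : ℝ → ℂ, Integrable φ ∧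
    ∀ x ∈ Set.Ioo a b ∩ E, ψ x = paperFT φ x

/-- `ψ ∈ P^{1,2}[L_loc^{E,ξ}]`: `ψ² + φ̂₁ψ + φ̂₀ = 0` on `I ∩ E` for some open interval
`I ∋ ξ` and `φ₀, φ₁ ∈ L¹(ℝ)`. -/
def MemP12 (E : Set ℝ) (ξ : ℝ) (ψ : ℝ → ℂ) : Prop :=
  ∃ a b : ℝ, a < ξ ∧ ξ < b ∧ ∃ φ₀ φ₁ : ℝ → ℂ, Integrable φ₀ ∧ Integrable φ₁ ∧
    ∀ x ∈ Set.Ioo a b ∩ E, ψ x ^ 2 + paperFT φ₁ x * ψ x + paperFT φ₀ x = 0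

/-- `ψ ∈ P^{1,p}[L_loc^{E,ξ}]`: `ψ^p + φ̂₂ψ² + φ̂₁ψ + φ̂₀ = 0` on `I ∩ E` for some open
interval `I ∋ ξ` and `φ₀, φ₁, φ₂ ∈ L¹(ℝ)`. -/
def MemP1p (p : ℕ) (E : Set ℝ) (ξ : ℝ) (ψ : ℝ → ℂ) : Prop :=
  ∃ a b : ℝ, a < ξ ∧ ξ < b ∧ ∃ φ₀ φ₁ φ₂ : ℝ → ℂ,
    Integrable φ₀ ∧ Integrable φ₁ ∧ Integrable φ₂ ∧
    ∀ x ∈ Set.Ioo a b ∩ E,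
      ψ x ^ p + paperFT φ₂ x * ψ x ^ 2 + paperFT φ₁ x * ψ x + paperFT φ₀ x = 0

open FourierTransform
open scoped Convolution

lemma paperFT_eq_fourier (g : ℝ → ℂ) (x : ℝ) : paperFT g x = 𝓕 g (x / 2) := by
  rw [Real.fourier_real_eq_integral_exp_smul, paperFT]
  congr 1 with t
  rw [smul_eq_mul]
  congr 2
  push_cast
  ring

lemma integrable_paperFT_integrand {g : ℝ → ℂ} (hg : Integrable g) (x : ℝ) :
    Integrable fun t : ℝ ↦
      Complex.exp (-(Complex.I * (Real.pi : ℂ) * (x : ℂ) * (t : ℂ))) * g t :=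
  hg.bdd_mul (c := 1) (by fun_prop : Continuous _).aestronglyMeasurable
    (ae_of_all _ fun t ↦ by simp [Complex.norm_exp])

lemma paperFT_add {f g : ℝ → ℂ} (hf : Integrable f) (hg : Integrable g) :
    paperFT (f + g) = paperFT f + paperFT g := by
  ext x
  simp only [paperFT, Pi.add_apply, mul_add]
  exact integral_add (integrable_paperFT_integrand hf x) (integrable_paperFT_integrand hg x)

lemma paperFT_neg (f : ℝ → ℂ) : paperFT (-f) = -paperFT f := by
  ext x
  simp [paperFT, integral_neg]

lemma paperFT_zero : paperFT 0 = 0 := by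
  ext x
  simp [paperFT]

lemma paperFT_convolution {f g : ℝ → ℂ} (hf : Integrable f) (hg : Integrable g) :
    paperFT (f ⋆[ContinuousLinearMap.mul ℂ ℂ] g) = paperFT f * paperFT g := by
  ext x
  simp only [paperFT_eq_fourier, Pi.mul_apply, Real.fourier_mul_convolution_eq hf hg]

-- Only non-unital: by Riemann–Lebesgue the constant `1` is not a transform.
def paperFTL1 : NonUnitalSubring (ℝ → ℂ) where
  carrier := {u | ∃ φ, Integrable φ ∧ paperFT φ = u}
  zero_mem' := ⟨0, integrable_zero _ _ _, paperFT_zero⟩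
  add_mem' := by
    rintro _ _ ⟨f, hf, rfl⟩ ⟨g, hg, rfl⟩
    exact ⟨f + g, hf.add hg, paperFT_add hf hg⟩
  neg_mem' := by
    rintro _ ⟨f, hf, rfl⟩
    exact ⟨-f, hf.neg, paperFT_neg f⟩
  mul_mem' := by
    rintro _ _ ⟨f, hf, rfl⟩ ⟨g, hg, rfl⟩
    exact ⟨_, hf.integrable_convolution _ hg, paperFT_convolution hf hg⟩

lemma paperFT_mem_paperFTL1 {φ : ℝ → ℂ} (hφ : Integrable φ) : paperFT φ ∈ paperFTL1 :=
  ⟨φ, hφ, rfl⟩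

lemma NonUnitalSubring.exists_pow_eq_of_quadratic {ι R : Type*} [CommRing R]
    (S : NonUnitalSubring (ι → R)) {T : Set ι} {ψ a b : ι → R} (ha : a ∈ S) (hb : b ∈ S)
    (h : ∀ x ∈ T, ψ x ^ 2 + a x * ψ x + b x = 0) (n : ℕ) :
    ∃ α ∈ S, ∃ β ∈ S, ∀ x ∈ T, ψ x ^ (n + 2) = α x * ψ x + β x := by
  induction n with
  | zero =>
    refine ⟨-a, S.neg_mem ha, -b, S.neg_mem hb, fun x hx ↦ ?_⟩
    simp only [Pi.neg_apply]
    linear_combination h x hx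
  | succ n ih =>
    obtain ⟨α, hα, β, hβ, hpow⟩ := ih
    refine ⟨β - α * a, S.sub_mem hβ (S.mul_mem hα ha), -(α * b), S.neg_mem (S.mul_mem hα hb),
      fun x hx ↦ ?_⟩
    simp only [Pi.sub_apply, Pi.neg_apply, Pi.mul_apply]
    linear_combination ψ x * hpow x hx + α x * h x hx

theorem Lloc_subset_P12_subset_P1p_general (E : Set ℝ) (ξ : ℝ) (ψ : ℝ → ℂ) :
    (MemLloc E ξ ψ → MemP12 E ξ ψ)
    ∧ ∀ p : ℕ, 3 ≤ p → (MemP12 E ξ ψ → MemP1p p E ξ ψ) := by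
  constructor
  · rintro ⟨-, a, b, ha, hb, φ, hφ, hψ⟩
    refine ⟨a, b, ha, hb, 0, -φ, integrable_zero _ _ _, hφ.neg, fun x hx ↦ ?_⟩
    rw [paperFT_zero, paperFT_neg, hψ x hx]
    simp only [Pi.neg_apply, Pi.zero_apply]
    ring
  · rintro p hp ⟨a, b, ha, hb, φ₀, φ₁, hφ₀, hφ₁, hψ⟩
    obtain ⟨α, hα, β, hβ, hpow⟩ := paperFTL1.exists_pow_eq_of_quadratic
      (paperFT_mem_paperFTL1 hφ₁) (paperFT_mem_paperFTL1 hφ₀) hψ (p - 2)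
    obtain ⟨φα, hφα, hα'⟩ := paperFTL1.neg_mem hα
    obtain ⟨φβ, hφβ, hβ'⟩ := paperFTL1.neg_mem hβ
    refine ⟨a, b, ha, hb, φβ, φα, 0, hφβ, hφα, integrable_zero _ _ _, fun x hx ↦ ?_⟩
    rw [hα', hβ', paperFT_zero, ← Nat.sub_add_cancel (show 2 ≤ p by omega), hpow x hx]
    simp only [Pi.neg_apply, Pi.zero_apply]
    ring

/-- The inclusions `L_loc^{E,ξ} ⊆ P^{1,2}[L_loc^{E,ξ}] ⊆ P^{1,p}[L_loc^{E,ξ}]` for `p ≥ 3`. -/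
theorem Lloc_subset_P12_subset_P1p (E : Set ℝ) (ξ : ℝ) (hξ : ξ ∈ E) (ψ : ℝ → ℂ) :
    (MemLloc E ξ ψ → MemP12 E ξ ψ)
    ∧ ∀ p : ℕ, 3 ≤ p → (MemP12 E ξ ψ → MemP1p p E ξ ψ) :=
  Lloc_subset_P12_subset_P1p_general E ξ ψ
end
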